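/- Let λ ∈ [0,1), let W be a propagation matrix, and let Ψ^{(∞)} be a fixed point of the basic cooperative optimization update T_λ. Then the equilibrium state defines a lower bound function on the objective: for every configuration x, ∑_{i=1}^n Ψ^{(∞)}_i(x_i) ≤ E(x). -/

import Mathlib

/- Evaluating the minimum defining `T_λ(Ψ)_i(x_i)` at `x` itself bounds it by the modified
sub-objective at `x`. Summing over `i`, the unit column sums of `W` collapse the coupling term to
`λ ∑_j Ψ_j(x_j)`, so any `Ψ ≤ T_λ(Ψ)` satisfies `∑_i Ψ_i(x_i) ≤ (1 - λ) E(x) + λ ∑_i Ψ_i(x_i)`,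
and `λ < 1` gives the bound. -/

open Finset Filter Topology

/-- A propagation matrix: nonnegative entries with unit column sums. -/
def IsPropagationMatrix {n : ℕ} (W : Fin n → Fin n → ℝ) : Prop :=
  (∀ i j, 0 ≤ W i j) ∧ ∀ j, ∑ i, W i j = 1

/-- The basic cooperative optimization update `T_λ`:
`T_λ(Ψ)_i(a) = min_{x : x_i = a} ((1−λ) E_i(x) + λ ∑_j w_{ij} Ψ_j(x_j))`. -/
noncomputable def coopT {n : ℕ} {D : Fin n → Type} [∀ i, Fintype (D i)]
    [∀ i, Nonempty (D i)]
    (E : Fin n → ((i : Fin n) → D i) → ℝ) (W : Fin n → Fin n → ℝ) (lam : ℝ)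
    (Ψ : (i : Fin n) → D i → ℝ) : (i : Fin n) → D i → ℝ :=
  fun i a =>
    Finset.univ.inf' Finset.univ_nonempty
      (fun x : (j : Fin n) → D j =>
        (1 - lam) * E i (Function.update x i a) +
          lam * ∑ j, W i j * Ψ j (Function.update x i a j))

/-- The total objective `E(x) = ∑ i, E_i(x)`. -/
def objective {n : ℕ} {D : Fin n → Type}
    (E : Fin n → ((i : Fin n) → D i) → ℝ) (x : (i : Fin n) → D i) : ℝ :=
  ∑ i, E i x

/-- `x̃` is a consensus solution with respect to the state `Ψ` and cooperation strength
`lam`: for every `i`, `x̃` globally minimizes the modified sub-objective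
`x ↦ (1−λ) E_i(x) + λ ∑_j w_{ij} Ψ_j(x_j)`. -/
def IsConsensusState {n : ℕ} {D : Fin n → Type}
    (E : Fin n → ((i : Fin n) → D i) → ℝ) (W : Fin n → Fin n → ℝ) (lam : ℝ)
    (Ψ : (i : Fin n) → D i → ℝ) (xt : (i : Fin n) → D i) : Prop :=
  ∀ i, ∀ x : (j : Fin n) → D j,
    (1 - lam) * E i xt + lam * ∑ j, W i j * Ψ j (xt j)
      ≤ (1 - lam) * E i x + lam * ∑ j, W i j * Ψ j (x j)

section CooperativeOptimization

variable {n : ℕ} {D : Fin n → Type} [∀ i, Fintype (D i)] [∀ i, Nonempty (D i)]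
  {E : Fin n → ((i : Fin n) → D i) → ℝ} {W : Fin n → Fin n → ℝ} {lam : ℝ}
  {Ψ : (i : Fin n) → D i → ℝ}

theorem coopT_apply_le (i : Fin n) (x : (j : Fin n) → D j) :
    coopT E W lam Ψ i (x i) ≤ (1 - lam) * E i x + lam * ∑ j, W i j * Ψ j (x j) := by
  have h := Finset.inf'_le (fun y : (j : Fin n) → D j =>
      (1 - lam) * E i (Function.update y i (x i)) +
        lam * ∑ j, W i j * Ψ j (Function.update y i (x i) j)) (Finset.mem_univ x)
  rwa [Function.update_eq_self] at h

omit [∀ i, Fintype (D i)] [∀ i, Nonempty (D i)] in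
theorem sum_sum_mul_eq_sum_of_sum_col_eq_one (hcol : ∀ j, ∑ i, W i j = 1) (v : Fin n → ℝ) :
    ∑ i, ∑ j, W i j * v j = ∑ j, v j := by
  rw [Finset.sum_comm]
  exact Finset.sum_congr rfl fun j _ => by rw [← Finset.sum_mul, hcol j, one_mul]

theorem sum_le_objective_of_le_coopT (hcol : ∀ j, ∑ i, W i j = 1) (hlam : lam < 1)
    (hΨ : ∀ i a, Ψ i a ≤ coopT E W lam Ψ i a) (x : (i : Fin n) → D i) :
    ∑ i, Ψ i (x i) ≤ objective E x := by
  have hsum : ∑ i, Ψ i (x i) ≤ (1 - lam) * objective E x + lam * ∑ i, Ψ i (x i) :=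
    calc ∑ i, Ψ i (x i)
        ≤ ∑ i, ((1 - lam) * E i x + lam * ∑ j, W i j * Ψ j (x j)) :=
          Finset.sum_le_sum fun i _ => (hΨ i (x i)).trans (coopT_apply_le i x)
      _ = (1 - lam) * objective E x + lam * ∑ i, Ψ i (x i) := by
          rw [Finset.sum_add_distrib, ← Finset.mul_sum, ← Finset.mul_sum,
            sum_sum_mul_eq_sum_of_sum_col_eq_one hcol]
          rfl
  nlinarith

end CooperativeOptimization

theorem equilibrium_is_lower_bound_general (n : ℕ) (D : Fin n → Type)
    [∀ i, Fintype (D i)] [∀ i, Nonempty (D i)]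
    (E : Fin n → ((i : Fin n) → D i) → ℝ) (W : Fin n → Fin n → ℝ)
    (hW : IsPropagationMatrix W) (lam : ℝ) (hlam1 : lam < 1)
    (Ψinf : (i : Fin n) → D i → ℝ) (hfix : coopT E W lam Ψinf = Ψinf) :
    ∀ x : (i : Fin n) → D i, ∑ i, Ψinf i (x i) ≤ objective E x :=
  sum_le_objective_of_le_coopT hW.2 hlam1 fun i a => by rw [hfix]

/-- Any fixed point `Ψ^{(∞)}` of `T_λ` defines a lower bound function
on the objective: `∑_i Ψ^{(∞)}_i(x_i) ≤ E(x)` for every configuration `x`. -/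
theorem equilibrium_is_lower_bound (n : ℕ) (hn : 1 ≤ n) (D : Fin n → Type)
    [∀ i, Fintype (D i)] [∀ i, Nonempty (D i)]
    (E : Fin n → ((i : Fin n) → D i) → ℝ) (W : Fin n → Fin n → ℝ)
    (hW : IsPropagationMatrix W) (lam : ℝ) (hlam0 : 0 ≤ lam) (hlam1 : lam < 1)
    (Ψinf : (i : Fin n) → D i → ℝ) (hfix : coopT E W lam Ψinf = Ψinf) :
    ∀ x : (i : Fin n) → D i, ∑ i, Ψinf i (x i) ≤ objective E x :=
  equilibrium_is_lower_bound_general n D E W hW lam hlam1 Ψinf hfix
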